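/- Let (X,d) be a compact metric space and let (X, f_{1,∞}) be a non-autonomous discrete system such that f_{1,∞} is feeble open, each f_n is surjective, (f_n) converges uniformly to a continuous map f : X → X, and the compositions (f_r^k) converge collectively to (f^k). Then f_{1,∞} is syndetically transitive if and only if f is syndetically transitive. -/

import Mathlib

open Set Filter

/-- `nds f i n` is the `n`-step composition `f_i^n = f (i+n-1) ∘ ⋯ ∘ f i`, with `nds f i 0 = id`. -/
def nds {X : Type*} (f : ℕ → X → X) (i : ℕ) : ℕ → X → X
  | 0 => id
  | n + 1 => f (i + n) ∘ nds f i n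

section TopDefs

variable {X : Type*} [TopologicalSpace X]

/-- The NDS `f_{1,∞}` is (topologically) transitive. -/
def NDSTransitive (f : ℕ → X → X) : Prop :=
  ∀ U V : Set X, IsOpen U → U.Nonempty → IsOpen V → V.Nonempty →
    ∃ n : ℕ, 0 < n ∧ (nds f 1 n '' U ∩ V).Nonempty

/-- The NDS `f_{1,∞}` is mixing. -/
def NDSMixing (f : ℕ → X → X) : Prop :=
  ∀ U V : Set X, IsOpen U → U.Nonempty → IsOpen V → V.Nonempty →
    ∃ N : ℕ, ∀ n : ℕ, N ≤ n → (nds f 1 n '' U ∩ V).Nonempty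

/-- The NDS `f_{1,∞}` is weakly mixing. -/
def NDSWeaklyMixing (f : ℕ → X → X) : Prop :=
  ∀ U₁ U₂ V₁ V₂ : Set X, IsOpen U₁ → U₁.Nonempty → IsOpen U₂ → U₂.Nonempty →
    IsOpen V₁ → V₁.Nonempty → IsOpen V₂ → V₂.Nonempty →
    ∃ n : ℕ, 0 < n ∧ (nds f 1 n '' U₁ ∩ V₁).Nonempty ∧ (nds f 1 n '' U₂ ∩ V₂).Nonempty

/-- The NDS `f_{1,∞}` is multi-transitive. -/
def NDSMultiTransitive (f : ℕ → X → X) : Prop :=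
  ∀ m : ℕ, 0 < m → ∀ U V : Fin m → Set X,
    (∀ j, IsOpen (U j)) → (∀ j, (U j).Nonempty) →
    (∀ j, IsOpen (V j)) → (∀ j, (V j).Nonempty) →
    ∃ l : ℕ, 0 < l ∧ ∀ j : Fin m, (nds f 1 (l * (j.1 + 1)) '' U j ∩ V j).Nonempty

/-- The NDS `f_{1,∞}` is totally transitive. -/
def NDSTotallyTransitive (f : ℕ → X → X) : Prop :=
  ∀ k : ℕ, 0 < k → ∀ U V : Set X, IsOpen U → U.Nonempty → IsOpen V → V.Nonempty →
    ∃ n : ℕ, 0 < n ∧ (nds f 1 (n * k) '' U ∩ V).Nonempty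

/-- The NDS `f_{1,∞}` is minimal: every orbit is dense. -/
def NDSMinimal (f : ℕ → X → X) : Prop :=
  ∀ x : X, Dense (Set.range fun n : ℕ => nds f 1 n x)

/-- The NDS `f_{1,∞}` is feeble open. -/
def FeebleOpen (f : ℕ → X → X) : Prop :=
  ∀ i : ℕ, 1 ≤ i → ∀ U : Set X, IsOpen U → U.Nonempty → (interior (f i '' U)).Nonempty

/-- A set of positive integers is syndetic (has bounded gaps). -/
def SyndeticSet (A : Set ℕ) : Prop :=
  ∃ M : ℕ, ∀ i : ℕ, 1 ≤ i → ∃ j ∈ A, i ≤ j ∧ j ≤ i + M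

/-- A set of positive integers is thick (contains arbitrarily long runs). -/
def ThickSet (A : Set ℕ) : Prop :=
  ∀ p : ℕ, ∃ n : ℕ, ∀ j : ℕ, n ≤ j → j ≤ n + p → j ∈ A

/-- The NDS `f_{1,∞}` is syndetically transitive. -/
def NDSSyndeticallyTransitive (f : ℕ → X → X) : Prop :=
  ∀ U V : Set X, IsOpen U → U.Nonempty → IsOpen V → V.Nonempty →
    SyndeticSet {n : ℕ | 0 < n ∧ (nds f 1 n '' U ∩ V).Nonempty}

/-- The NDS `f_{1,∞}` has dense periodic points. -/
def NDSDensePeriodicPoints (f : ℕ → X → X) : Prop :=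
  Dense {x : X | ∃ k : ℕ, 0 < k ∧ ∀ n : ℕ, 0 < n → nds f 1 (k * n) x = x}

/-- The NDS `f_{k,∞}` is strongly transitive. -/
def NDSStronglyTransitiveFrom (f : ℕ → X → X) (k : ℕ) : Prop :=
  ∀ U : Set X, IsOpen U → U.Nonempty →
    ∃ M : ℕ, 0 < M ∧ (⋃ i ∈ Set.Icc 1 M, nds f k i '' U) = Set.univ

/-- An autonomous map is transitive. -/
def MapTransitive {Y : Type*} [TopologicalSpace Y] (g : Y → Y) : Prop :=
  ∀ U V : Set Y, IsOpen U → U.Nonempty → IsOpen V → V.Nonempty →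
    ∃ n : ℕ, 0 < n ∧ (g^[n] '' U ∩ V).Nonempty

/-- An autonomous map is weakly mixing. -/
def MapWeaklyMixing {Y : Type*} [TopologicalSpace Y] (g : Y → Y) : Prop :=
  ∀ U₁ U₂ V₁ V₂ : Set Y, IsOpen U₁ → U₁.Nonempty → IsOpen U₂ → U₂.Nonempty →
    IsOpen V₁ → V₁.Nonempty → IsOpen V₂ → V₂.Nonempty →
    ∃ n : ℕ, 0 < n ∧ (g^[n] '' U₁ ∩ V₁).Nonempty ∧ (g^[n] '' U₂ ∩ V₂).Nonempty

/-- An autonomous map is totally transitive. -/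
def MapTotallyTransitive {Y : Type*} [TopologicalSpace Y] (g : Y → Y) : Prop :=
  ∀ k : ℕ, 0 < k → ∀ U V : Set Y, IsOpen U → U.Nonempty → IsOpen V → V.Nonempty →
    ∃ n : ℕ, 0 < n ∧ (g^[n * k] '' U ∩ V).Nonempty

/-- An autonomous map is syndetically transitive. -/
def MapSyndeticallyTransitive {Y : Type*} [TopologicalSpace Y] (g : Y → Y) : Prop :=
  ∀ U V : Set Y, IsOpen U → U.Nonempty → IsOpen V → V.Nonempty →
    SyndeticSet {n : ℕ | 0 < n ∧ (g^[n] '' U ∩ V).Nonempty}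

/-- An autonomous map is minimal. -/
def MapMinimal {Y : Type*} [TopologicalSpace Y] (g : Y → Y) : Prop :=
  ∀ x : Y, Dense (Set.range fun n : ℕ => g^[n] x)

end TopDefs

section MetricDefs

variable {X : Type*} [MetricSpace X]

/-- The compositions `(f_r^k)` converge collectively to `(f^k)` (w.r.t. the supremum metric). -/
def CollectivelyConverges (f : ℕ → X → X) (g : X → X) : Prop :=
  ∀ ε : ℝ, 0 < ε → ∃ r₀ : ℕ, ∀ r : ℕ, r₀ ≤ r → ∀ k : ℕ, 1 ≤ k → ∀ x : X,
    dist (nds f r k x) (g^[k] x) < ε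

/-- `N(U, δ)`: the times at which the NDS is `δ`-sensitive on `U`. -/
def SensSet (f : ℕ → X → X) (U : Set X) (δ : ℝ) : Set ℕ :=
  {n : ℕ | 0 < n ∧ ∃ x ∈ U, ∃ y ∈ U, δ < dist (nds f 1 n x) (nds f 1 n y)}

/-- The NDS `f_{1,∞}` is multi-sensitive. -/
def NDSMultiSensitive (f : ℕ → X → X) : Prop :=
  ∃ δ : ℝ, 0 < δ ∧ ∀ m : ℕ, 0 < m → ∀ U : Fin m → Set X,
    (∀ i, IsOpen (U i)) → (∀ i, (U i).Nonempty) → (⋂ i, SensSet f (U i) δ).Nonempty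

/-- The NDS `f_{1,∞}` is thickly sensitive. -/
def NDSThicklySensitive (f : ℕ → X → X) : Prop :=
  ∃ δ : ℝ, 0 < δ ∧ ∀ U : Set X, IsOpen U → U.Nonempty → ThickSet (SensSet f U δ)

/-- The NDS `f_{1,∞}` is syndetically sensitive. -/
def NDSSyndeticallySensitive (f : ℕ → X → X) : Prop :=
  ∃ δ : ℝ, 0 < δ ∧ ∀ U : Set X, IsOpen U → U.Nonempty → SyndeticSet (SensSet f U δ)

/-- The NDS `f_{1,∞}` is mildly mixing: its product with every transitive NDS on a compact
metric space is transitive. -/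
def NDSMildlyMixing (f : ℕ → X → X) : Prop :=
  ∀ (Y : Type*) [MetricSpace Y] [CompactSpace Y] (g : ℕ → Y → Y),
    (∀ n : ℕ, 1 ≤ n → Continuous (g n)) → NDSTransitive g →
    NDSTransitive (fun n (p : X × Y) => (f n p.1, g n p.2))

/-- The NDS `f_{1,∞}` is Li–Yorke chaotic. -/
def LiYorkeChaotic (f : ℕ → X → X) : Prop :=
  ∃ S : Set X, ¬S.Countable ∧ ∀ x ∈ S, ∀ y ∈ S, x ≠ y →
    Filter.liminf (fun n : ℕ => dist (nds f 1 n x) (nds f 1 n y)) Filter.atTop = 0 ∧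
    0 < Filter.limsup (fun n : ℕ => dist (nds f 1 n x) (nds f 1 n y)) Filter.atTop

end MetricDefs

/-!
Collective convergence gives a delay `m` after which the tail `f_{m+1}^k` stays uniformly
`ε`-close to `F^k` for every `k`. Hence, after transporting open sets through `f_1^m` (by
preimage, using continuity and surjectivity, or by the interior of the image, using feeble
openness), the hitting times of the NDS and of `F` agree up to the shift by `m`, and
syndeticity is invariant under such shifts.
-/

lemma nds_add_apply {X : Type*} (f : ℕ → X → X) (i m k : ℕ) (x : X) :
    nds f i (m + k) x = nds f (i + m) k (nds f i m x) := by
  induction k with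
  | zero => rfl
  | succ k ih =>
    change f (i + (m + k)) (nds f i (m + k) x) = f (i + m + k) (nds f (i + m) k (nds f i m x))
    rw [ih, Nat.add_assoc]

lemma continuous_nds {X : Type*} [TopologicalSpace X] {f : ℕ → X → X} {i : ℕ}
    (hcont : ∀ n : ℕ, i ≤ n → Continuous (f n)) (m : ℕ) : Continuous (nds f i m) := by
  induction m with
  | zero => exact continuous_id
  | succ m ih => exact (hcont (i + m) (Nat.le_add_right i m)).comp ih

lemma surjective_nds {X : Type*} {f : ℕ → X → X} {i : ℕ}
    (hsurj : ∀ n : ℕ, i ≤ n → Function.Surjective (f n)) (m : ℕ) :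
    Function.Surjective (nds f i m) := by
  induction m with
  | zero => exact Function.surjective_id
  | succ m ih => exact (hsurj (i + m) (Nat.le_add_right i m)).comp ih

lemma FeebleOpen.interior_image_nds_nonempty {X : Type*} [TopologicalSpace X]
    {f : ℕ → X → X} (hfo : FeebleOpen f) {i : ℕ} (hi : 1 ≤ i) (m : ℕ) {U : Set X}
    (hU : IsOpen U) (hUne : U.Nonempty) : (interior (nds f i m '' U)).Nonempty := by
  induction m with
  | zero => simpa [nds, hU.interior_eq] using hUne
  | succ m ih =>
    refine (hfo (i + m) (by omega) _ isOpen_interior ih).mono (interior_mono ?_)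
    change f (i + m) '' interior (nds f i m '' U) ⊆ (f (i + m) ∘ nds f i m) '' U
    rw [image_comp]
    exact image_mono interior_subset

lemma CollectivelyConverges.exists_dist_nds_shift_lt {X : Type*} [MetricSpace X]
    {f : ℕ → X → X} {F : X → X} (hcoll : CollectivelyConverges f F) {ε : ℝ} (hε : 0 < ε) :
    ∃ m : ℕ, ∀ k : ℕ, 1 ≤ k → ∀ x : X, dist (nds f 1 (m + k) x) (F^[k] (nds f 1 m x)) < ε := by
  obtain ⟨r₀, hr₀⟩ := hcoll ε hε
  refine ⟨r₀, fun k hk x => ?_⟩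
  rw [nds_add_apply]
  exact hr₀ (1 + r₀) (Nat.le_add_left r₀ 1) k hk _

lemma SyndeticSet.of_sub {A B : Set ℕ} (hA : SyndeticSet A) (m : ℕ)
    (hAB : ∀ k : ℕ, 1 ≤ k → m + k ∈ A → k ∈ B) : SyndeticSet B := by
  obtain ⟨M, hM⟩ := hA
  refine ⟨M, fun i hi => ?_⟩
  obtain ⟨j, hjA, hij, hjM⟩ := hM (i + m) (by omega)
  exact ⟨j - m, hAB (j - m) (by omega) (by rwa [Nat.add_sub_cancel' (by omega)]),
    by omega, by omega⟩

lemma SyndeticSet.of_add {A B : Set ℕ} (hA : SyndeticSet A) (m : ℕ)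
    (hAB : ∀ j ∈ A, m + j ∈ B) : SyndeticSet B := by
  obtain ⟨M, hM⟩ := hA
  refine ⟨m + M, fun i _ => ?_⟩
  obtain ⟨j, hjA, hij, hjM⟩ := hM (max 1 (i - m)) (le_max_left _ _)
  exact ⟨m + j, hAB j hjA, by omega, by omega⟩

section Limit

variable {X : Type*} [MetricSpace X] {f : ℕ → X → X} {F : X → X}

lemma mapSyndeticallyTransitive_of_ndsSyndeticallyTransitive
    (hcont : ∀ n : ℕ, 1 ≤ n → Continuous (f n))
    (hsurj : ∀ n : ℕ, 1 ≤ n → Function.Surjective (f n))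
    (hcoll : CollectivelyConverges f F) (hnds : NDSSyndeticallyTransitive f) :
    MapSyndeticallyTransitive F := by
  intro U V hU hUne hV ⟨v, hv⟩
  obtain ⟨ε, hε, hball⟩ := Metric.isOpen_iff.1 hV v hv
  obtain ⟨m, hm⟩ := hcoll.exists_dist_nds_shift_lt (half_pos hε)
  have hWne : (nds f 1 m ⁻¹' U).Nonempty := hUne.preimage (surjective_nds hsurj m)
  refine (hnds _ (Metric.ball v (ε / 2)) (hU.preimage (continuous_nds hcont m)) hWne
    Metric.isOpen_ball (Metric.nonempty_ball.2 (half_pos hε))).of_sub m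
    fun k hk ⟨_, y, ⟨w, hwU, hwy⟩, hyv⟩ => ?_
  refine ⟨hk, F^[k] (nds f 1 m w), mem_image_of_mem _ hwU, hball ?_⟩
  rw [← hwy, Metric.mem_ball] at hyv
  rw [Metric.mem_ball]
  linarith [dist_triangle_left (F^[k] (nds f 1 m w)) v (nds f 1 (m + k) w), hm k hk w]

lemma ndsSyndeticallyTransitive_of_mapSyndeticallyTransitive (hfo : FeebleOpen f)
    (hcoll : CollectivelyConverges f F) (hF : MapSyndeticallyTransitive F) :
    NDSSyndeticallyTransitive f := by
  intro U V hU hUne hV ⟨v, hv⟩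
  obtain ⟨ε, hε, hball⟩ := Metric.isOpen_iff.1 hV v hv
  obtain ⟨m, hm⟩ := hcoll.exists_dist_nds_shift_lt (half_pos hε)
  refine (hF _ (Metric.ball v (ε / 2)) isOpen_interior
    (hfo.interior_image_nds_nonempty le_rfl m hU hUne) Metric.isOpen_ball (Metric.nonempty_ball.2 (half_pos hε))).of_add m
    fun j ⟨hj, y, ⟨x, hxU, hxy⟩, hyv⟩ => ?_
  obtain ⟨u, huU, rfl⟩ := interior_subset hxU
  refine ⟨by omega, nds f 1 (m + j) u, mem_image_of_mem _ huU, hball ?_⟩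
  rw [← hxy, Metric.mem_ball] at hyv
  rw [Metric.mem_ball]
  linarith [dist_triangle (nds f 1 (m + j) u) (F^[j] (nds f 1 m u)) v, hm j hj u]

end Limit

theorem syndeticallyTransitive_iff_limit_syndeticallyTransitive_general {X : Type*} [MetricSpace X]
    (f : ℕ → X → X) (F : X → X)
    (hcont : ∀ n : ℕ, 1 ≤ n → Continuous (f n))
    (hfo : FeebleOpen f)
    (hsurj : ∀ n : ℕ, 1 ≤ n → Function.Surjective (f n))
    (hcoll : CollectivelyConverges f F) :
    NDSSyndeticallyTransitive f ↔ MapSyndeticallyTransitive F :=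
  ⟨mapSyndeticallyTransitive_of_ndsSyndeticallyTransitive hcont hsurj hcoll,
    ndsSyndeticallyTransitive_of_mapSyndeticallyTransitive hfo hcoll⟩

theorem syndeticallyTransitive_iff_limit_syndeticallyTransitive {X : Type*} [MetricSpace X]
    [CompactSpace X]
    (f : ℕ → X → X) (F : X → X)
    (hcont : ∀ n : ℕ, 1 ≤ n → Continuous (f n))
    (hfo : FeebleOpen f)
    (hsurj : ∀ n : ℕ, 1 ≤ n → Function.Surjective (f n))
    (hF : Continuous F)
    (hunif : TendstoUniformly (fun n x => f n x) F Filter.atTop)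
    (hcoll : CollectivelyConverges f F) :
    NDSSyndeticallyTransitive f ↔ MapSyndeticallyTransitive F :=
  syndeticallyTransitive_iff_limit_syndeticallyTransitive_general f F hcont hfo hsurj hcoll
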